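/- Let p be an odd prime and c ∈ F_p with c ≠ ±2 and c^2 - 4 a nonsquare in F_p. Then the trinomial coefficient T(p-2,0), computed in F_p, equals -c/(c^2-4). -/

import Mathlib

/-!
Write `g = X ^ 2 + c X + 1`, so that `T(n, 0)` is the coefficient of `X ^ n` in `g ^ n`.
As `c ^ 2 - 4` is a nonsquare, `g` has no root in `𝔽_p`, so `1 / g(x) = g(x) ^ (p - 2)`
pointwise. Since `∑ₓ x ^ i` vanishes for `i < 2 (p - 1)` except at `i = p - 1`, where it
is `-1`, summing `x / g(x)` over `𝔽_p` gives `-T(p - 2, 0)`. Completing the square turns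
this sum, up to an odd part that cancels, into `-(c / 2) ∑ᵧ 1 / (y ^ 2 + d)` with
`-d = (c ^ 2 - 4) / 4` a nonsquare, and the same device, together with
`C(p - 2, k) ≡ (-1) ^ k (k + 1)` and Euler's criterion, evaluates the last sum to `1 / (2 d)`.
-/

/-- The trinomial coefficient: coefficient of `x^k` in `(x + c + x⁻¹)^n` over `R`. -/
noncomputable def triCoeff (R : Type*) [CommRing R] (c : R) (n : ℕ) (k : ℤ) : R :=
  (AddMonoidAlgebra.coeff ((LaurentPolynomial.T 1 + LaurentPolynomial.C c + LaurentPolynomial.T (-1)) ^ n :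
      LaurentPolynomial R) : ℤ →₀ R) k

namespace LaurentPolynomial

theorem T_one_add_C_add_T_neg_one {R : Type*} [CommRing R] (c : R) :
    (T 1 + C c + T (-1) : R[T;T⁻¹]) =
      T (-1) * (Polynomial.X ^ 2 + Polynomial.C c * Polynomial.X + 1 : Polynomial R).toLaurent := by
  rw [map_add, map_add, map_mul, Polynomial.toLaurent_X_pow, Polynomial.toLaurent_C,
    Polynomial.toLaurent_X, map_one, mul_add, mul_add, mul_one, ← mul_assoc,
    mul_comm (T (-1)) (C c), mul_assoc, ← T_add, ← T_add]
  norm_num [T_zero]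

end LaurentPolynomial

open Polynomial Finset

theorem triCoeff_zero_eq_coeff {R : Type*} [CommRing R] (c : R) (n : ℕ) :
    triCoeff R c n 0 = ((X ^ 2 + C c * X + 1) ^ n).coeff n := by
  rw [triCoeff, LaurentPolynomial.T_one_add_C_add_T_neg_one, mul_pow, LaurentPolynomial.T_pow,
    ← map_pow, mul_neg_one, LaurentPolynomial.T, AddMonoidAlgebra.coeff_single_mul_apply, one_mul,
    neg_neg, add_zero, LaurentPolynomial.coeff_toLaurent]
  exact Finsupp.mapDomain_apply Nat.cast_injective _ n

namespace FiniteField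

variable {K : Type*} [Field K] [Fintype K]

local notation "q" => Fintype.card K

theorem pow_card_sub_two_eq_inv {a : K} (ha : a ≠ 0) : a ^ (q - 2) = a⁻¹ := by
  refine eq_inv_of_mul_eq_one_left ?_
  have hq : 1 < q := Fintype.one_lt_card
  rw [← pow_succ, show q - 2 + 1 = q - 1 by omega, pow_card_sub_one_eq_one a ha]

theorem sum_pow_eq_sum_units_pow [DecidableEq K] {i : ℕ} (hi : i ≠ 0) :
    ∑ x : K, x ^ i = ∑ x : Kˣ, (x : K) ^ i := by
  let val : Kˣ ↪ K := ⟨Units.val, Units.val_injective⟩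
  rw [← show ∑ x ∈ univ.map val, x ^ i = ∑ x : Kˣ, (x : K) ^ i from sum_map _ _ _]
  refine (Finset.sum_subset (subset_univ _) fun x _ hx => ?_).symm
  obtain rfl : x = 0 := by
    by_contra h
    exact hx (mem_map.mpr ⟨(isUnit_iff_ne_zero.mpr h).unit, mem_univ _, rfl⟩)
  exact zero_pow hi

theorem sum_pow_of_lt_two_mul {i : ℕ} (hi : i < 2 * (q - 1)) :
    ∑ x : K, x ^ i = if i = q - 1 then -1 else 0 := by
  have hq : 1 < q := Fintype.one_lt_card
  rcases Nat.eq_zero_or_pos i with rfl | hpos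
  · rw [if_neg (by omega)]
    simp
  classical
  rw [sum_pow_eq_sum_units_pow hpos.ne', sum_pow_units]
  congr 1
  refine propext ⟨fun ⟨t, ht⟩ => ?_, fun h => h ▸ dvd_rfl⟩
  rcases t with _ | _ | t <;> [omega; omega; nlinarith]

theorem sum_eval_eq_neg_coeff {P : K[X]} (hP : P.natDegree < 2 * (q - 1)) :
    ∑ x, P.eval x = -P.coeff (q - 1) := by
  have hq : 1 < q := Fintype.one_lt_card
  simp_rw [eval_eq_sum_range' hP]
  rw [sum_comm]
  simp_rw [← mul_sum]
  rw [sum_congr rfl fun i hi => by rw [sum_pow_of_lt_two_mul (mem_range.mp hi)]]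
  simp only [mul_ite, mul_neg, mul_one, mul_zero]
  rw [sum_ite_eq' _ _ (fun i => -P.coeff i), if_pos (mem_range.mpr (by omega))]

theorem sum_div_eval_eq_neg_coeff {f g : K[X]} (hf : f.natDegree ≤ 1) (hg : g.natDegree ≤ 2)
    (hg0 : ∀ x, g.eval x ≠ 0) :
    ∑ x, f.eval x / g.eval x = -(f * g ^ (q - 2)).coeff (q - 1) := by
  have hq : 1 < q := Fintype.one_lt_card
  have hdeg : (f * g ^ (q - 2)).natDegree < 2 * (q - 1) := by
    have : (g ^ (q - 2)).natDegree ≤ (q - 2) * g.natDegree := natDegree_pow_le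
    have : (f * g ^ (q - 2)).natDegree ≤ f.natDegree + (g ^ (q - 2)).natDegree := natDegree_mul_le
    have := Nat.mul_le_mul_left (q - 2) hg
    omega
  rw [← sum_eval_eq_neg_coeff hdeg]
  simp_rw [eval_mul, eval_pow, pow_card_sub_two_eq_inv (hg0 _), div_eq_mul_inv]

theorem sum_div_sq_add_eq_zero (h2 : (2 : K) ≠ 0) (d : K) : ∑ y : K, y / (y ^ 2 + d) = 0 := by
  have h : ∑ y : K, y / (y ^ 2 + d) = -∑ y : K, y / (y ^ 2 + d) := by
    rw [← sum_neg_distrib]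
    exact Fintype.sum_equiv (Equiv.neg K) _ _ fun y => by simp [neg_div]
  exact (mul_eq_zero.mp (by linear_combination h : (2 : K) * _ = 0)).resolve_left h2

end FiniteField

namespace Polynomial

theorem coeff_X_sq_add_C_pow {R : Type*} [CommSemiring R] (d : R) (n k : ℕ) :
    ((X ^ 2 + C d) ^ n).coeff (2 * k) = d ^ (n - k) * n.choose k := by
  rw [show (X ^ 2 + C d : R[X]) = expand R 2 (X + C d) by simp, ← map_pow,
    coeff_expand two_pos, if_pos (dvd_mul_right 2 k), Nat.mul_div_cancel_left k two_pos,
    coeff_X_add_C_pow]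

end Polynomial

namespace ZMod

variable {p : ℕ} [Fact p.Prime]

theorem natCast_choose_sub_two {j : ℕ} (hj : j + 2 ≤ p) :
    ((p - 2).choose j : ZMod p) = (-1) ^ j * (j + 1) := by
  induction j with
  | zero => simp
  | succ j ih =>
    have hpj : ((p - 2 - j : ℕ) : ZMod p) = -(j + 2) := by
      rw [Nat.sub_sub, Nat.cast_sub (by omega), natCast_self]
      push_cast
      ring
    have hj1 : ((j : ZMod p) + 1) ≠ 0 := by
      exact_mod_cast (natCast_eq_zero_iff _ _).not.mpr
        (Nat.not_dvd_of_pos_of_lt (by omega) (by omega))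
    have key := congrArg (Nat.cast : ℕ → ZMod p) (Nat.choose_succ_right_eq (p - 2) j)
    simp only [Nat.cast_mul, Nat.cast_add, Nat.cast_one] at key
    rw [ih (by omega), hpj] at key
    apply mul_right_cancel₀ hj1
    rw [key]
    push_cast
    ring

theorem sum_inv_sq_add (hp : p ≠ 2) {d : ZMod p} (hd : ¬IsSquare (-d)) :
    ∑ y : ZMod p, (y ^ 2 + d)⁻¹ = (2 * d)⁻¹ := by
  have hodd : p % 2 = 1 := (Fact.out : p.Prime).eq_two_or_odd.resolve_left hp
  have hp2 := (Fact.out : p.Prime).two_le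
  set k := p / 2 with hk
  have hd0 : -d ≠ 0 := fun h => hd (h ▸ IsSquare.zero)
  have hEuler : (-1) ^ k * d ^ k = -1 := by
    rw [← neg_pow]
    exact (pow_div_two_eq_neg_one_or_one p hd0).resolve_left (mt (euler_criterion p hd0).mpr hd)
  have hg0 : ∀ y : ZMod p, (X ^ 2 + C d).eval y ≠ 0 := fun y h =>
    hd ⟨y, by simp only [eval_add, eval_pow, eval_X, eval_C] at h; linear_combination -h⟩
  have hsum := FiniteField.sum_div_eval_eq_neg_coeff (f := 1) (by simp) (by compute_degree) hg0
  rw [ZMod.card, one_mul, show p - 1 = 2 * k by omega, coeff_X_sq_add_C_pow,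
    natCast_choose_sub_two (by omega), show p - 2 - k = k - 1 by omega] at hsum
  simp only [eval_one, one_div, eval_add, eval_pow, eval_X, eval_C] at hsum
  have hdk : d ^ (k - 1) * d = d ^ k := pow_sub_one_mul (by omega) d
  have h2k : (2 : ZMod p) * (k + 1) = 1 := by
    have := congrArg (Nat.cast : ℕ → ZMod p) (show 2 * (k + 1) = p + 1 by omega)
    push_cast [natCast_self] at this
    linear_combination this
  rw [hsum, eq_comm]
  refine inv_eq_of_mul_eq_one_left ?_
  linear_combination (-(-1) ^ k * (2 * (k + 1))) * hdk - ((-1) ^ k * d ^ k) * h2k - hEuler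

theorem sum_div_sq_add_mul_add_one (hp : p ≠ 2) {c : ZMod p} (hc : ¬IsSquare (c ^ 2 - 4)) :
    ∑ x : ZMod p, x / (x ^ 2 + c * x + 1) = c / (c ^ 2 - 4) := by
  have h2 : (2 : ZMod p) ≠ 0 := Ring.two_ne_zero (by rwa [ringChar_zmod_n])
  have h22 : (2 : ZMod p) * 2⁻¹ = 1 := mul_inv_cancel₀ h2
  have hc0 : c ^ 2 - 4 ≠ 0 := fun h => hc (h ▸ IsSquare.zero)
  set d := 1 - (c / 2) ^ 2
  have h4d : c ^ 2 - 4 = -(2 * (2 * d)) := by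
    linear_combination (-c ^ 2 * (2 * 2⁻¹ + 1)) * h22
  have hd0 : d ≠ 0 := fun h => hc0 (by rw [h4d, h, mul_zero, mul_zero, neg_zero])
  have hd : ¬IsSquare (-d) := fun ⟨r, hr⟩ => hc ⟨2 * r, by linear_combination h4d + 4 * hr⟩
  have hshift :
      ∑ x : ZMod p, x / (x ^ 2 + c * x + 1) = ∑ y : ZMod p, (y - c / 2) / (y ^ 2 + d) :=
    Fintype.sum_equiv (Equiv.addRight (c / 2)) _ _ fun x => by
      rw [Equiv.coe_addRight, add_sub_cancel_right]
      congr 1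
      linear_combination (-(c * x)) * h22
  simp_rw [hshift, sub_div, sum_sub_distrib, div_eq_mul_inv (c / 2), ← mul_sum,
    FiniteField.sum_div_sq_add_eq_zero h2, sum_inv_sq_add hp hd, h4d]
  field_simp
  ring

end ZMod

theorem tri_p_sub_two_zero_nonsq_general (p : ℕ) [Fact p.Prime] (hp : p ≠ 2) (c : ZMod p)
    (hsq : ¬ IsSquare (c ^ 2 - 4)) :
    triCoeff (ZMod p) c (p - 2) 0 = -c / (c ^ 2 - 4) := by
  have hp2 := (Fact.out : p.Prime).two_le
  have hg0 : ∀ x : ZMod p, (X ^ 2 + C c * X + 1).eval x ≠ 0 := fun x h => by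
    simp only [eval_add, eval_mul, eval_pow, eval_X, eval_C, eval_one] at h
    exact hsq ⟨2 * x + c, by linear_combination -4 * h⟩
  have hsum := FiniteField.sum_div_eval_eq_neg_coeff natDegree_X_le (by compute_degree) hg0
  rw [ZMod.card, show p - 1 = p - 2 + 1 by omega, coeff_X_mul] at hsum
  simp only [eval_X, eval_add, eval_mul, eval_pow, eval_C, eval_one,
    ZMod.sum_div_sq_add_mul_add_one hp hsq] at hsum
  rw [triCoeff_zero_eq_coeff, neg_div, hsum, neg_neg]

theorem tri_p_sub_two_zero_nonsq (p : ℕ) [Fact p.Prime] (hp : p ≠ 2) (c : ZMod p)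
    (hc2 : c ≠ 2) (hc2' : c ≠ -2) (hsq : ¬ IsSquare (c ^ 2 - 4)) :
    triCoeff (ZMod p) c (p - 2) 0 = -c / (c ^ 2 - 4) :=
  tri_p_sub_two_zero_nonsq_general p hp c hsq
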